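/- arXiv:2506.01075 — 3 statements merged into one kernel-verified Lean document; each statement's English description precedes it below -/
import Mathlib

section
/- Let D be a chain BN on n variables X_1, …, X_n and let f(x) = x_n be the projection onto the last coordinate. Define the signed differences D_{k,μ} = μ_{k,1}−μ_{k,0} and D_{k,σ} = σ_{k,1}−σ_{k,0} for 2 ≤ k ≤ n, and D_{1,μ} = D_{1,σ} = 0 with μ_{1,0} = μ_1 and σ_{1,0} = σ_1 for the root. Then the sum of all Fourier coefficients of f equals Σ_{S⊆[n]} f̂_S = Σ_{k=1}^{n} (μ_{k,0} + σ_{k,0}) · ∏_{ℓ=k+1}^{n} (D_{ℓ,μ} + D_{ℓ,σ}). -/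
/-!
A chain BN on `{0,1}^n` is a Bayesian network whose DAG is the directed path
`1 → 2 → ⋯ → n` (here indexed by `Fin n`, node `0` being the root): node `0` has
no parent and the parent of node `i > 0` is node `i−1`.  `cond i b` is
`P(X_i = 1 | X_{i−1} = b)` (for the root both values coincide and give its
unconditional mean).  The joint distribution is the product of the conditionals,
and the BN-induced Fourier basis is `φ_i(x) = (x_i − μ_{i,x_{i−1}})/σ_{i,x_{i−1}}`,
`φ_S = ∏_{i∈S} φ_i`, with spectral norm `L1(f) = Σ_S |f̂_S|`.
-/

open Finset

noncomputable section

/-- Interpret a Boolean as a real number (`true ↦ 1`, `false ↦ 0`). -/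
def b2r (b : Bool) : ℝ := if b then 1 else 0

/-- A chain Bayesian network distribution on `{0,1}^n`. -/
structure ChainBN (n : ℕ) where
  /-- `cond i b = P(X_i = 1 | X_{i-1} = b)`; for the root `i = 0` it is its mean. -/
  cond : Fin n → Bool → ℝ
  cond_pos : ∀ i b, 0 < cond i b
  cond_lt_one : ∀ i b, cond i b < 1
  /-- the root has no parent, so its "conditional" is constant -/
  root_const : ∀ (h : 0 < n) (b b' : Bool), cond ⟨0, h⟩ b = cond ⟨0, h⟩ b'

namespace ChainBN

variable {n : ℕ}

/-- The value of the parent of node `i` under assignment `x` (root: dummy value). -/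
def parentVal (x : Fin n → Bool) (i : Fin n) : Bool :=
  if (i : ℕ) = 0 then false
  else x ⟨(i : ℕ) - 1, Nat.lt_of_le_of_lt (Nat.sub_le _ _) i.isLt⟩

/-- The joint probability mass function of the chain. -/
def prob (B : ChainBN n) (x : Fin n → Bool) : ℝ :=
  ∏ i, if x i then B.cond i (parentVal x i) else 1 - B.cond i (parentVal x i)

/-- Conditional standard deviation `σ_{i,b} = √(μ_{i,b}(1−μ_{i,b}))`. -/
def sigma (B : ChainBN n) (i : Fin n) (b : Bool) : ℝ :=
  Real.sqrt (B.cond i b * (1 - B.cond i b))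

/-- BN-induced basis function of a single node. -/
def phi (B : ChainBN n) (i : Fin n) (x : Fin n → Bool) : ℝ :=
  (b2r (x i) - B.cond i (parentVal x i)) / B.sigma i (parentVal x i)

/-- BN-induced basis function `φ_S = ∏_{i ∈ S} φ_i` (with `φ_∅ ≡ 1`). -/
def phiS (B : ChainBN n) (S : Finset (Fin n)) (x : Fin n → Bool) : ℝ :=
  ∏ i ∈ S, B.phi i x

/-- Expectation with respect to the chain distribution. -/
def expect (B : ChainBN n) (g : (Fin n → Bool) → ℝ) : ℝ :=
  ∑ x, B.prob x * g x

/-- Fourier coefficient `f̂_S = E_D[f(X) φ_S(X)]`. -/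
def coeff (B : ChainBN n) (f : (Fin n → Bool) → ℝ) (S : Finset (Fin n)) : ℝ :=
  B.expect fun x => f x * B.phiS S x

/-- Spectral norm `L1(f) = Σ_S |f̂_S|`. -/
def L1 (B : ChainBN n) (f : (Fin n → Bool) → ℝ) : ℝ :=
  ∑ S : Finset (Fin n), |B.coeff f S|

end ChainBN

/-- The conjunction `∏_{i∈T1} x_i · ∏_{j∈T0} (1−x_j)` on `{0,1}^n`. -/
def conj {n : ℕ} (T0 T1 : Finset (Fin n)) (x : Fin n → Bool) : ℝ :=
  (∏ i ∈ T1, b2r (x i)) * ∏ j ∈ T0, (1 - b2r (x j))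

namespace ChainSum

open ChainBN Function

variable {n : ℕ}

/-- The collapsed node weight `p_i(x) (1 + φ_i(x))`. -/
def w (B : ChainBN n) (i : Fin n) (x : Fin n → Bool) : ℝ :=
  if x i then B.cond i (parentVal x i) + B.sigma i (parentVal x i)
  else 1 - (B.cond i (parentVal x i) + B.sigma i (parentVal x i))

def cA (B : ChainBN n) (j : Fin n) : ℝ := B.cond j false + B.sigma j false

def dd (B : ChainBN n) (ℓ : Fin n) : ℝ :=
  (B.cond ℓ true - B.cond ℓ false) + (B.sigma ℓ true - B.sigma ℓ false)

/-- Partial closed-form signed marginal. -/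
def aa (B : ChainBN n) (k : ℕ) : ℝ :=
  ∑ j ∈ univ.filter (fun j : Fin n => (j : ℕ) ≤ k), cA B j *
    ∏ ℓ ∈ univ.filter (fun ℓ : Fin n => j < ℓ ∧ (ℓ : ℕ) ≤ k), dd B ℓ

lemma sigma_pos (B : ChainBN n) (i : Fin n) (b : Bool) : 0 < B.sigma i b := by
  have h1 := B.cond_pos i b
  have h2 := B.cond_lt_one i b
  exact Real.sqrt_pos.mpr (mul_pos h1 (by linarith))

lemma sigma_sq (B : ChainBN n) (i : Fin n) (b : Bool) :
    B.sigma i b ^ 2 = B.cond i b * (1 - B.cond i b) := by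
  have h1 := B.cond_pos i b
  have h2 := B.cond_lt_one i b
  rw [ChainBN.sigma, Real.sq_sqrt (by nlinarith)]

lemma node_factor (B : ChainBN n) (i : Fin n) (x : Fin n → Bool) :
    (if x i then B.cond i (parentVal x i) else 1 - B.cond i (parentVal x i)) *
      (1 + B.phi i x) = w B i x := by
  set b := parentVal x i
  have hσ := sigma_pos B i b
  have hσ2 := sigma_sq B i b
  rw [ChainBN.phi, w]
  cases hx : x i <;> simp [hx, b2r] <;> simp only [b] at * <;> field_simp <;> nlinarith [hσ2]

/-- Summing over a boolean cube coordinate. -/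
lemma sum_flip (j : Fin n) (F : (Fin n → Bool) → ℝ) :
    ∑ x, F x = (∑ x, (F (update x j true) + F (update x j false))) / 2 := by
  have hinv : Function.Involutive (fun x : Fin n → Bool => update x j (!(x j))) := by
    intro x
    funext i
    by_cases h : i = j
    · subst h; simp
    · simp [Function.update_of_ne h]
  have h1 : ∑ x, F (update x j (!(x j))) = ∑ x, F x :=
    Equiv.sum_comp hinv.toPerm F
  have h2 : ∀ x : Fin n → Bool,
      F x + F (update x j (!(x j))) = F (update x j true) + F (update x j false) := by
    intro x
    cases hx : x j
    · have hu : update x j false = x := by rw [← hx]; exact Function.update_eq_self j x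
      rw [hu]
      simp only [hx, Bool.not_false]
      ring
    · have hu : update x j true = x := by rw [← hx]; exact Function.update_eq_self j x
      rw [hu]
      simp only [hx, Bool.not_true]
  have h3 : (∑ x, (F (update x j true) + F (update x j false)))
      = ∑ x, (F x + F (update x j (!(x j)))) :=
    Finset.sum_congr rfl fun x _ => (h2 x).symm
  rw [h3, Finset.sum_add_distrib, h1]
  ring

lemma parentVal_update_lt {i j : Fin n} (h : (i : ℕ) < (j : ℕ)) (x : Fin n → Bool)
    (b : Bool) : parentVal (update x j b) i = parentVal x i := by
  unfold parentVal
  split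
  · rfl
  · next h0 =>
    exact Function.update_of_ne (by
      intro hc
      rw [Fin.ext_iff] at hc
      simp at hc
      omega) _ _

lemma w_update_lt (B : ChainBN n) {i j : Fin n} (h : (i : ℕ) < (j : ℕ))
    (x : Fin n → Bool) (b : Bool) : w B i (update x j b) = w B i x := by
  have hne : i ≠ j := by
    intro hc; rw [hc] at h; omega
  rw [w, w, parentVal_update_lt h, Function.update_of_ne hne]

lemma parentVal_update_self {j : Fin n} (hj : 0 < (j : ℕ)) (x : Fin n → Bool)
    (b : Bool) :
    parentVal (update x j b) j
      = x ⟨(j : ℕ) - 1, Nat.lt_of_le_of_lt (Nat.sub_le _ _) j.isLt⟩ := by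
  unfold parentVal
  split
  · omega
  · rw [Function.update_of_ne (by
      intro hc
      rw [Fin.ext_iff] at hc
      simp at hc
      omega)]

lemma w_update_self (B : ChainBN n) {j : Fin n} (hj : 0 < (j : ℕ)) (x : Fin n → Bool)
    (b : Bool) :
    w B j (update x j b) =
      if b then B.cond j (x ⟨(j : ℕ) - 1, Nat.lt_of_le_of_lt (Nat.sub_le _ _) j.isLt⟩)
            + B.sigma j (x ⟨(j : ℕ) - 1, Nat.lt_of_le_of_lt (Nat.sub_le _ _) j.isLt⟩)
      else 1 - (B.cond j (x ⟨(j : ℕ) - 1, Nat.lt_of_le_of_lt (Nat.sub_le _ _) j.isLt⟩)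
            + B.sigma j (x ⟨(j : ℕ) - 1, Nat.lt_of_le_of_lt (Nat.sub_le _ _) j.isLt⟩)) := by
  rw [w, parentVal_update_self hj, Function.update_self]

lemma sum_const_cube (c : ℝ) : (∑ _x : Fin n → Bool, c) = 2 ^ n * c := by
  rw [Finset.sum_const, Finset.card_univ]
  simp [Fintype.card_fun, mul_comm]

lemma aa_zero (B : ChainBN n) (hn : 0 < n) : aa B 0 = cA B ⟨0, hn⟩ := by
  have h1 : univ.filter (fun j : Fin n => (j : ℕ) ≤ 0) = {⟨0, hn⟩} := by
    ext i; simp [Fin.ext_iff, Nat.le_zero]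
  rw [aa, h1, Finset.sum_singleton]
  have h2 : univ.filter (fun ℓ : Fin n => (⟨0, hn⟩ : Fin n) < ℓ ∧ (ℓ : ℕ) ≤ 0) = ∅ := by
    ext ℓ; simp only [Finset.mem_filter, Finset.mem_univ, true_and,
      Finset.notMem_empty, iff_false, not_and, Fin.lt_def]; omega
  rw [h2, Finset.prod_empty, mul_one]

lemma filter_le_succ (k : ℕ) (hk1 : k + 1 < n) :
    univ.filter (fun i : Fin n => (i : ℕ) ≤ k + 1)
      = insert ⟨k + 1, hk1⟩ (univ.filter (fun i : Fin n => (i : ℕ) ≤ k)) := by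
  ext i
  simp only [Finset.mem_filter, Finset.mem_univ, true_and, Finset.mem_insert, Fin.ext_iff]
  omega

lemma aa_succ (B : ChainBN n) (k : ℕ) (hk1 : k + 1 < n) :
    aa B (k + 1) = cA B ⟨k + 1, hk1⟩ + dd B ⟨k + 1, hk1⟩ * aa B k := by
  have hnotmem : (⟨k + 1, hk1⟩ : Fin n) ∉ univ.filter (fun i : Fin n => (i : ℕ) ≤ k) := by
    simp
  rw [aa, filter_le_succ k hk1, Finset.sum_insert hnotmem]
  have hempty : univ.filter
      (fun ℓ : Fin n => (⟨k + 1, hk1⟩ : Fin n) < ℓ ∧ (ℓ : ℕ) ≤ k + 1) = ∅ := by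
    ext ℓ
    simp only [Finset.mem_filter, Finset.mem_univ, true_and, Finset.notMem_empty,
      iff_false, not_and, Fin.lt_def]
    omega
  rw [hempty, Finset.prod_empty, mul_one]
  congr 1
  rw [aa, Finset.mul_sum]
  refine Finset.sum_congr rfl fun i hi => ?_
  simp only [Finset.mem_filter, Finset.mem_univ, true_and] at hi
  have hins : univ.filter (fun ℓ : Fin n => i < ℓ ∧ (ℓ : ℕ) ≤ k + 1)
      = insert ⟨k + 1, hk1⟩ (univ.filter (fun ℓ : Fin n => i < ℓ ∧ (ℓ : ℕ) ≤ k)) := by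
    ext ℓ
    simp only [Finset.mem_filter, Finset.mem_univ, true_and, Finset.mem_insert,
      Fin.ext_iff, Fin.lt_def]
    omega
  have hnm : (⟨k + 1, hk1⟩ : Fin n) ∉
      univ.filter (fun ℓ : Fin n => i < ℓ ∧ (ℓ : ℕ) ≤ k) := by
    simp
  rw [hins, Finset.prod_insert hnm]
  ring

/-- Main transfer-matrix induction. -/
lemma key (B : ChainBN n) : ∀ k (hk : k < n),
    (∑ x : Fin n → Bool, ∏ i ∈ univ.filter (fun i : Fin n => (i : ℕ) ≤ k), w B i x)
        = 2 ^ (n - 1 - k) ∧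
    (∑ x : Fin n → Bool,
        b2r (x ⟨k, hk⟩) * ∏ i ∈ univ.filter (fun i : Fin n => (i : ℕ) ≤ k), w B i x)
        = 2 ^ (n - 1 - k) * aa B k := by
  intro k
  induction k with
  | zero =>
    intro hk
    have h1 : univ.filter (fun i : Fin n => (i : ℕ) ≤ 0) = {(⟨0, hk⟩ : Fin n)} := by
      ext i; simp [Fin.ext_iff, Nat.le_zero]
    have hpow : (2 : ℝ) ^ n = 2 ^ (n - 1 - 0) * 2 := by
      rw [← pow_succ]; congr 1; omega
    have hpv : ∀ y : Fin n → Bool, parentVal y ⟨0, hk⟩ = false := by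
      intro y; unfold parentVal; rw [if_pos rfl]
    have hwt : ∀ x : Fin n → Bool,
        w B ⟨0, hk⟩ (update x ⟨0, hk⟩ true) = cA B ⟨0, hk⟩ := by
      intro x
      rw [w, hpv, Function.update_self, cA]
      simp
    have hwf : ∀ x : Fin n → Bool,
        w B ⟨0, hk⟩ (update x ⟨0, hk⟩ false) = 1 - cA B ⟨0, hk⟩ := by
      intro x
      rw [w, hpv, Function.update_self, cA]
      simp
    have hsing : ∀ x : Fin n → Bool,
        (∏ i ∈ univ.filter (fun i : Fin n => (i : ℕ) ≤ 0), w B i x)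
          = w B ⟨0, hk⟩ x := by
      intro x; rw [h1, Finset.prod_singleton]
    constructor
    · calc (∑ x : Fin n → Bool,
            ∏ i ∈ univ.filter (fun i : Fin n => (i : ℕ) ≤ 0), w B i x)
          = ∑ x : Fin n → Bool, w B ⟨0, hk⟩ x :=
            Finset.sum_congr rfl fun x _ => hsing x
        _ = (∑ x : Fin n → Bool, (w B ⟨0, hk⟩ (update x ⟨0, hk⟩ true)
              + w B ⟨0, hk⟩ (update x ⟨0, hk⟩ false))) / 2 := sum_flip _ _
        _ = (∑ _x : Fin n → Bool, (1 : ℝ)) / 2 := by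
            refine congrArg (· / 2) (Finset.sum_congr rfl fun x _ => ?_)
            rw [hwt x, hwf x]
            ring
        _ = 2 ^ (n - 1 - 0) := by rw [sum_const_cube, hpow]; ring
    · calc (∑ x : Fin n → Bool, b2r (x ⟨0, hk⟩) *
            ∏ i ∈ univ.filter (fun i : Fin n => (i : ℕ) ≤ 0), w B i x)
          = ∑ x : Fin n → Bool, b2r (x ⟨0, hk⟩) * w B ⟨0, hk⟩ x :=
            Finset.sum_congr rfl fun x _ => by rw [hsing x]
        _ = (∑ x : Fin n → Bool,
              (b2r ((update x ⟨0, hk⟩ true) ⟨0, hk⟩) * w B ⟨0, hk⟩ (update x ⟨0, hk⟩ true)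
              + b2r ((update x ⟨0, hk⟩ false) ⟨0, hk⟩) *
                  w B ⟨0, hk⟩ (update x ⟨0, hk⟩ false))) / 2 := sum_flip _ _
        _ = (∑ _x : Fin n → Bool, cA B ⟨0, hk⟩) / 2 := by
            refine congrArg (· / 2) (Finset.sum_congr rfl fun x _ => ?_)
            rw [hwt x, hwf x, Function.update_self, Function.update_self]
            simp [b2r]
        _ = 2 ^ (n - 1 - 0) * aa B 0 := by
            rw [sum_const_cube, hpow, aa_zero B hk]; ring
  | succ k ih =>
    intro hk1
    have hk : k < n := by omega
    obtain ⟨IHN, IHM⟩ := ih hk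
    set j : Fin n := ⟨k + 1, hk1⟩ with hj
    have hjv : (j : ℕ) = k + 1 := rfl
    have hj0 : 0 < (j : ℕ) := by omega
    have hjp : (⟨(j : ℕ) - 1, Nat.lt_of_le_of_lt (Nat.sub_le _ _) j.isLt⟩ : Fin n)
        = ⟨k, hk⟩ := by
      simp [Fin.ext_iff, hjv]
    have hnotmem : j ∉ univ.filter (fun i : Fin n => (i : ℕ) ≤ k) := by simp [hjv]
    have hP : ∀ (x : Fin n → Bool) (b : Bool),
        (∏ i ∈ univ.filter (fun i : Fin n => (i : ℕ) ≤ k), w B i (update x j b))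
          = ∏ i ∈ univ.filter (fun i : Fin n => (i : ℕ) ≤ k), w B i x := by
      intro x b
      refine Finset.prod_congr rfl fun i hi => ?_
      simp only [Finset.mem_filter] at hi
      exact w_update_lt B (by omega) x b
    have hprod : ∀ x : Fin n → Bool,
        (∏ i ∈ univ.filter (fun i : Fin n => (i : ℕ) ≤ k + 1), w B i x)
          = w B j x * ∏ i ∈ univ.filter (fun i : Fin n => (i : ℕ) ≤ k), w B i x := by
      intro x
      rw [filter_le_succ k hk1, Finset.prod_insert hnotmem]
    have hpow : (2 : ℝ) ^ (n - 1 - k) = 2 ^ (n - 1 - (k + 1)) * 2 := by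
      rw [← pow_succ]; congr 1; omega
    have hwt : ∀ x : Fin n → Bool, w B j (update x j true)
        = B.cond j (x ⟨k, hk⟩) + B.sigma j (x ⟨k, hk⟩) := by
      intro x; rw [w_update_self B hj0, hjp]; simp
    have hwf : ∀ x : Fin n → Bool, w B j (update x j false)
        = 1 - (B.cond j (x ⟨k, hk⟩) + B.sigma j (x ⟨k, hk⟩)) := by
      intro x; rw [w_update_self B hj0, hjp]; simp
    constructor
    · calc (∑ x : Fin n → Bool,
            ∏ i ∈ univ.filter (fun i : Fin n => (i : ℕ) ≤ k + 1), w B i x)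
          = ∑ x : Fin n → Bool,
              w B j x * ∏ i ∈ univ.filter (fun i : Fin n => (i : ℕ) ≤ k), w B i x :=
            Finset.sum_congr rfl fun x _ => hprod x
        _ = (∑ x : Fin n → Bool,
              (w B j (update x j true) *
                (∏ i ∈ univ.filter (fun i : Fin n => (i : ℕ) ≤ k), w B i (update x j true))
              + w B j (update x j false) *
                (∏ i ∈ univ.filter (fun i : Fin n => (i : ℕ) ≤ k),
                  w B i (update x j false)))) / 2 := sum_flip _ _
        _ = (∑ x : Fin n → Bool,
              ∏ i ∈ univ.filter (fun i : Fin n => (i : ℕ) ≤ k), w B i x) / 2 := by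
            refine congrArg (· / 2) (Finset.sum_congr rfl fun x _ => ?_)
            rw [hP x true, hP x false, hwt x, hwf x]
            ring
        _ = 2 ^ (n - 1 - (k + 1)) := by rw [IHN, hpow]; ring
    · calc (∑ x : Fin n → Bool, b2r (x ⟨k + 1, hk1⟩) *
            ∏ i ∈ univ.filter (fun i : Fin n => (i : ℕ) ≤ k + 1), w B i x)
          = ∑ x : Fin n → Bool, b2r (x j) *
              (w B j x * ∏ i ∈ univ.filter (fun i : Fin n => (i : ℕ) ≤ k), w B i x) :=
            Finset.sum_congr rfl fun x _ => by rw [hprod x]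
        _ = (∑ x : Fin n → Bool,
              (b2r ((update x j true) j) * (w B j (update x j true) *
                (∏ i ∈ univ.filter (fun i : Fin n => (i : ℕ) ≤ k), w B i (update x j true)))
              + b2r ((update x j false) j) * (w B j (update x j false) *
                (∏ i ∈ univ.filter (fun i : Fin n => (i : ℕ) ≤ k),
                  w B i (update x j false))))) / 2 := sum_flip _ _
        _ = (∑ x : Fin n → Bool,
              (cA B j * (∏ i ∈ univ.filter (fun i : Fin n => (i : ℕ) ≤ k), w B i x)
              + dd B j * (b2r (x ⟨k, hk⟩) *
                  ∏ i ∈ univ.filter (fun i : Fin n => (i : ℕ) ≤ k), w B i x))) / 2 := by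
            refine congrArg (· / 2) (Finset.sum_congr rfl fun x _ => ?_)
            rw [hP x true, hP x false, hwt x, hwf x,
              Function.update_self, Function.update_self]
            cases hxk : x ⟨k, hk⟩ <;> simp [b2r, cA, dd] <;> ring
        _ = (cA B j * 2 ^ (n - 1 - k) + dd B j * (2 ^ (n - 1 - k) * aa B k)) / 2 := by
            rw [Finset.sum_add_distrib, ← Finset.mul_sum, ← Finset.mul_sum, IHN, IHM]
        _ = 2 ^ (n - 1 - (k + 1)) * aa B (k + 1) := by
            rw [aa_succ B k hk1, hpow, ← hj]
            ring
  
end ChainSum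

/-- exact sum of coefficients for a chain with `f(x) = x_n`.
For a chain BN on `n ≥ 1` variables (indexed `0, …, n−1`, last index `n−1`) and
`f` the projection onto the last coordinate,
`Σ_S f̂_S = Σ_k (μ_{k,0} + σ_{k,0}) ∏_{ℓ > k} (D_{ℓ,μ} + D_{ℓ,σ})`,
where `D_{ℓ,μ} = μ_{ℓ,1} − μ_{ℓ,0}` and `D_{ℓ,σ} = σ_{ℓ,1} − σ_{ℓ,0}`
(these vanish automatically at the root, matching the convention
`D_{1,μ} = D_{1,σ} = 0`, `μ_{1,0} = μ₁`). -/
theorem chain_sum_of_coefficients {n : ℕ} (B : ChainBN n) (hn : 0 < n) :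
    (∑ S : Finset (Fin n),
        B.coeff (fun x => b2r (x ⟨n - 1, Nat.sub_lt hn one_pos⟩)) S)
      = ∑ k : Fin n, (B.cond k false + B.sigma k false) *
          ∏ ℓ ∈ univ.filter (fun ℓ : Fin n => k < ℓ),
            ((B.cond ℓ true - B.cond ℓ false) + (B.sigma ℓ true - B.sigma ℓ false)) := by
  classical
  have hlast : n - 1 < n := Nat.sub_lt hn one_pos
  have huniv : univ.filter (fun i : Fin n => (i : ℕ) ≤ n - 1) = univ := by
    ext i; simp; omega
  have hsum : ∀ x : Fin n → Bool,
      (∑ S : Finset (Fin n), ∏ i ∈ S, B.phi i x) = ∏ i, (B.phi i x + 1) := by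
    intro x
    have h := Finset.prod_add (fun i => B.phi i x) (fun _ => (1 : ℝ)) Finset.univ
    simp only [Finset.prod_const_one, mul_one, Finset.powerset_univ] at h
    exact h.symm
  have hw : ∀ x : Fin n → Bool,
      B.prob x * ∏ i, (B.phi i x + 1) = ∏ i, ChainSum.w B i x := by
    intro x
    rw [ChainBN.prob, ← Finset.prod_mul_distrib]
    refine Finset.prod_congr rfl fun i _ => ?_
    rw [add_comm (B.phi i x) 1]
    exact ChainSum.node_factor B i x
  have hstep : ∀ x : Fin n → Bool,
      (∑ S : Finset (Fin n),
          B.prob x * (b2r (x ⟨n - 1, hlast⟩) * ∏ i ∈ S, B.phi i x))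
        = b2r (x ⟨n - 1, hlast⟩) *
            ∏ i ∈ univ.filter (fun i : Fin n => (i : ℕ) ≤ n - 1), ChainSum.w B i x := by
    intro x
    rw [← Finset.mul_sum, ← Finset.mul_sum, hsum x, huniv,
      show B.prob x * (b2r (x ⟨n - 1, hlast⟩) * ∏ i, (B.phi i x + 1))
        = b2r (x ⟨n - 1, hlast⟩) * (B.prob x * ∏ i, (B.phi i x + 1)) by ring, hw x]
  have hM := (ChainSum.key B (n - 1) hlast).2
  simp only [ChainBN.coeff, ChainBN.expect, ChainBN.phiS]
  rw [Finset.sum_comm, Finset.sum_congr rfl fun x _ => hstep x, hM,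
    show n - 1 - (n - 1) = 0 by omega, pow_zero, one_mul, ChainSum.aa, huniv]
  refine Finset.sum_congr rfl fun k _ => ?_
  have hfil : univ.filter (fun ℓ : Fin n => k < ℓ ∧ (ℓ : ℕ) ≤ n - 1)
      = univ.filter (fun ℓ : Fin n => k < ℓ) := by
    ext ℓ
    simp only [Finset.mem_filter, Finset.mem_univ, true_and, and_iff_left_iff_imp]
    intro _
    omega
  rw [hfil]
  simp only [ChainSum.cA, ChainSum.dd]
end
end

section
/- For every n ≥ 1 there exists a directed acyclic graph G* on N = 24n−1 binary nodes in which every node has at most two parents and there is a single sink node V₁, together with a Bayesian network distribution on G* satisfying: every conditional probability μ_{i,y} satisfies μ_{i,y} ≥ 0.01, and for every node i and any two parent assignments y, y' one has |μ_{i,y} − μ_{i,y'}| ≤ 0.49; and yet the single-variable function f(x) = x_{V₁} has spectral norm L1(f) = Σ_S |f̂_S| ≥ 1.05^n, i.e. exponential in the number of nodes. -/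
/-!
A Bayesian network (BN) distribution on {0,1}^n: a DAG on [n] (encoded by parent
sets together with a rank function witnessing acyclicity) and, for each node `v`,
a conditional probability `cond v x ∈ (0,1)` of `X_v = 1` given the parent values,
depending only on the coordinates in `pa v`.  The joint distribution is
`prob x = ∏ v, P(x_v | x_{pa v})`, and the BN-induced basis functions are
`φ_v(x) = (x_v − μ_{v,x_pa(v)})/σ_{v,x_pa(v)}`, `φ_S = ∏_{v∈S} φ_v`.
-/

open Finset

noncomputable section

/-- A Bayesian network distribution on `{0,1}^n`. -/
structure BayesNet (n : ℕ) where
  /-- parent set of each node -/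
  pa : Fin n → Finset (Fin n)
  /-- the parent relation is acyclic (a DAG) -/
  acyclic : ∃ rank : Fin n → ℕ, ∀ v u, u ∈ pa v → rank u < rank v
  /-- `cond v x = P(X_v = 1 | X_{pa v} = x_{pa v})` -/
  cond : Fin n → (Fin n → Bool) → ℝ
  /-- the conditional probability of `v` depends only on the parents of `v` -/
  cond_local : ∀ v x y, (∀ u ∈ pa v, x u = y u) → cond v x = cond v y
  cond_pos : ∀ v x, 0 < cond v x
  cond_lt_one : ∀ v x, cond v x < 1

namespace BayesNet

variable {n : ℕ}

/-- The joint probability mass function `D(x) = ∏_v P(x_v | x_{pa v})`. -/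
def prob (B : BayesNet n) (x : Fin n → Bool) : ℝ :=
  ∏ v, if x v then B.cond v x else 1 - B.cond v x

/-- Conditional standard deviation `σ_{v, x_{pa v}}`. -/
def sigma (B : BayesNet n) (v : Fin n) (x : Fin n → Bool) : ℝ :=
  Real.sqrt (B.cond v x * (1 - B.cond v x))

/-- BN-induced basis function of a single node. -/
def phi (B : BayesNet n) (v : Fin n) (x : Fin n → Bool) : ℝ :=
  (b2r (x v) - B.cond v x) / B.sigma v x

/-- BN-induced basis function `φ_S = ∏_{v ∈ S} φ_v` (with `φ_∅ ≡ 1`). -/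
def phiS (B : BayesNet n) (S : Finset (Fin n)) (x : Fin n → Bool) : ℝ :=
  ∏ v ∈ S, B.phi v x

/-- Expectation with respect to the BN distribution. -/
def expect (B : BayesNet n) (g : (Fin n → Bool) → ℝ) : ℝ :=
  ∑ x, B.prob x * g x

/-- Fourier coefficient `f̂_S = E_D[f(X) φ_S(X)]`. -/
def coeff (B : BayesNet n) (f : (Fin n → Bool) → ℝ) (S : Finset (Fin n)) : ℝ :=
  B.expect fun x => f x * B.phiS S x

/-- Conditional expectation `E[g(X) | X_u = y_u for all u ∈ A]`. -/
def condExp (B : BayesNet n) (g : (Fin n → Bool) → ℝ) (A : Finset (Fin n))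
    (y : Fin n → Bool) : ℝ :=
  (∑ x ∈ univ.filter (fun x : Fin n → Bool => ∀ u ∈ A, x u = y u), B.prob x * g x) /
  (∑ x ∈ univ.filter (fun x : Fin n → Bool => ∀ u ∈ A, x u = y u), B.prob x)

/-- The union of the parent sets of the nodes of `S`. -/
def paS (B : BayesNet n) (S : Finset (Fin n)) : Finset (Fin n) := S.biUnion B.pa

/-- Spectral norm `L1(f) = Σ_S |f̂_S|`. -/
def L1 (B : BayesNet n) (f : (Fin n → Bool) → ℝ) : ℝ :=
  ∑ S : Finset (Fin n), |B.coeff f S|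

end BayesNet


/-! ### Construction for the lower bound -/

namespace BNLower

open Finset

/-- weight of a root/leaf node (`μ = 4/5`, `σ = 2/5`): `ν = 6/5`, `1-ν = -1/5`. -/
def lw (b : Bool) : ℝ := if b then 6/5 else -(1/5)

/-- weight of a chain node with value `a`, parents `b` (next chain node) and `l` (leaf). -/
def cw (a b l : Bool) : ℝ :=
  if a then (if b = l then 1 else 3/13) else (if b = l then 0 else 10/13)

def U (a b l : Bool) : ℝ := lw l * cw a b l

noncomputable def chainT (K : ℕ) (g : Bool → ℝ) : ℝ :=
  ∑ p : Fin (K+1) → Bool, ∑ q : Fin K → Bool,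
    g (p 0) * lw (p (Fin.last K)) * ∏ i : Fin K, U (p i.castSucc) (p i.succ) (q i)

lemma sum_pi_succ {n : ℕ} (F : (Fin (n+1) → Bool) → ℝ) :
    ∑ p : Fin (n+1) → Bool, F p = ∑ a : Bool, ∑ p : Fin n → Bool, F (Fin.cons a p) := by
  have h := Fintype.sum_equiv (Fin.consEquiv (fun _ => Bool))
    (fun x => F ((Fin.consEquiv (fun _ => Bool)) x)) F (fun x => rfl)
  rw [← h, Fintype.sum_prod_type]
  rfl

lemma chainT_zero (g : Bool → ℝ) : chainT 0 g = g true * (6/5) + g false * (-(1/5)) := by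
  unfold chainT
  rw [sum_pi_succ (fun p => ∑ q : Fin 0 → Bool,
      g (p 0) * lw (p (Fin.last 0)) * ∏ i : Fin 0, U (p i.castSucc) (p i.succ) (q i))]
  simp [lw, Fin.last]

lemma prod_U_cons {K : ℕ} (a l : Bool) (p : Fin (K+1) → Bool) (q : Fin K → Bool) :
    (∏ i : Fin (K+1), U ((Fin.cons a p : Fin (K+2) → Bool) i.castSucc)
      ((Fin.cons a p : Fin (K+2) → Bool) i.succ) ((Fin.cons l q : Fin (K+1) → Bool) i))
    = U a (p 0) l * ∏ i : Fin K, U (p i.castSucc) (p i.succ) (q i) := by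
  rw [Fin.prod_univ_succ]
  simp only [Fin.castSucc_zero, Fin.cons_zero, Fin.cons_succ, ← Fin.succ_castSucc]

lemma chainT_succ (K : ℕ) (g : Bool → ℝ) :
    chainT (K+1) g = chainT K (fun b => ∑ a : Bool, ∑ l : Bool, g a * U a b l) := by
  have hlast : ∀ (a : Bool) (p : Fin (K+1) → Bool),
      (Fin.cons a p : Fin (K+2) → Bool) (Fin.last (K+1)) = p (Fin.last K) := by
    intro a p; rw [← Fin.succ_last, Fin.cons_succ]
  have L : chainT (K+1) g = ∑ p : Fin (K+1) → Bool, ∑ q : Fin K → Bool, ∑ a : Bool,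
      ∑ l : Bool, g a * lw (p (Fin.last K)) *
        (U a (p 0) l * ∏ i : Fin K, U (p i.castSucc) (p i.succ) (q i)) := by
    unfold chainT
    rw [sum_pi_succ (fun p => ∑ q : Fin (K+1) → Bool,
        g (p 0) * lw (p (Fin.last (K+1))) * ∏ i : Fin (K+1), U (p i.castSucc) (p i.succ) (q i))]
    refine Eq.trans (Finset.sum_congr rfl (fun a _ => Finset.sum_congr rfl
      (fun p _ => sum_pi_succ _))) ?_
    refine Eq.trans (Finset.sum_congr rfl (fun a _ => Finset.sum_congr rfl
      (fun p _ => Finset.sum_congr rfl (fun l _ => Finset.sum_congr rfl (fun q _ => by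
        rw [Fin.cons_zero, hlast, prod_U_cons]))))) ?_
    rw [Finset.sum_comm]
    refine Finset.sum_congr rfl (fun p _ => ?_)
    refine Eq.trans (Finset.sum_congr rfl (fun a _ => Finset.sum_comm)) ?_
    exact Finset.sum_comm
  rw [L]
  unfold chainT
  refine Finset.sum_congr rfl (fun p _ => Finset.sum_congr rfl (fun q _ => ?_))
  simp only [Finset.sum_mul]
  refine Finset.sum_congr rfl (fun a _ => Finset.sum_congr rfl (fun l _ => by ring))

lemma chainT_affine (K : ℕ) (A B : ℝ) :
    chainT K (fun b => A + B * b2r b) = A + B * ((11/5) * (14/13)^K - 1) := by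
  induction K generalizing A B with
  | zero => rw [chainT_zero]; simp [b2r]; ring
  | succ K ih =>
      rw [chainT_succ]
      have h : (fun b => ∑ a : Bool, ∑ l : Bool, (A + B * b2r a) * U a b l)
           = fun b => (A + B/13) + (14*B/13) * b2r b := by
        funext b
        cases b <;> (simp [U, lw, cw, b2r, Fintype.sum_bool]; ring)
      rw [h, ih, pow_succ]
      ring

/-! ### The Bayesian network -/

def eqv (K : ℕ) : Fin (K+1) ⊕ Fin K ≃ Fin (2*K+1) :=
  finSumFinEquiv.trans (finCongr (by omega))

def cI (K : ℕ) (i : Fin (K+1)) : Fin (2*K+1) := eqv K (.inl i)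
def lI (K : ℕ) (j : Fin K) : Fin (2*K+1) := eqv K (.inr j)

@[simp] lemma eqv_symm_cI (K : ℕ) (i : Fin (K+1)) : (eqv K).symm (cI K i) = .inl i :=
  Equiv.symm_apply_apply _ _
@[simp] lemma eqv_symm_lI (K : ℕ) (j : Fin K) : (eqv K).symm (lI K j) = .inr j :=
  Equiv.symm_apply_apply _ _

def paF (K : ℕ) (v : Fin (2*K+1)) : Finset (Fin (2*K+1)) :=
  Sum.elim
    (fun i : Fin (K+1) => if h : (i : ℕ) < K then
      ({cI K ⟨(i : ℕ)+1, by omega⟩, lI K ⟨(i : ℕ), h⟩} : Finset (Fin (2*K+1))) else ∅)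
    (fun _ => ∅) ((eqv K).symm v)

def condF (K : ℕ) (v : Fin (2*K+1)) (x : Fin (2*K+1) → Bool) : ℝ :=
  Sum.elim
    (fun i : Fin (K+1) => if h : (i : ℕ) < K then
      (if x (cI K ⟨(i : ℕ)+1, by omega⟩) = x (lI K ⟨(i : ℕ), h⟩) then (1/2 : ℝ) else 1/26)
      else 4/5)
    (fun _ => (4/5 : ℝ)) ((eqv K).symm v)

lemma cI_injective (K : ℕ) : Function.Injective (cI K) := by
  intro i j h
  have := congrArg (eqv K).symm h
  simpa using this

noncomputable def theBN (K : ℕ) : BayesNet (2*K+1) where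
  pa := paF K
  acyclic := by
    refine ⟨fun v => Sum.elim (fun i : Fin (K+1) => K - (i : ℕ)) (fun _ : Fin K => 0) ((eqv K).symm v), ?_⟩
    intro v u hu
    unfold paF at hu
    rcases hs : (eqv K).symm v with i | j
    · rw [hs] at hu
      simp only [Sum.elim_inl] at hu
      by_cases h : (i : ℕ) < K
      · rw [dif_pos h] at hu
        rcases Finset.mem_insert.mp hu with h1 | h1
        · subst h1; simp [hs]; omega
        · rw [Finset.mem_singleton.mp h1]; simp [hs]; omega
      · rw [dif_neg h] at hu; exact absurd hu (Finset.notMem_empty u)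
    · rw [hs] at hu
      simp only [Sum.elim_inr] at hu
      exact absurd hu (Finset.notMem_empty u)
  cond := condF K
  cond_local := by
    intro v x y hxy
    unfold condF
    rcases hs : (eqv K).symm v with i | j
    · simp only [Sum.elim_inl]
      by_cases h : (i : ℕ) < K
      · rw [dif_pos h, dif_pos h]
        have h1 : x (cI K ⟨(i : ℕ)+1, by omega⟩) = y (cI K ⟨(i : ℕ)+1, by omega⟩) := by
          apply hxy; unfold paF; rw [hs]; simp only [Sum.elim_inl, dif_pos h]
          exact Finset.mem_insert_self _ _
        have h2 : x (lI K ⟨(i : ℕ), h⟩) = y (lI K ⟨(i : ℕ), h⟩) := by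
          apply hxy; unfold paF; rw [hs]; simp only [Sum.elim_inl, dif_pos h]
          exact Finset.mem_insert_of_mem (Finset.mem_singleton_self _)
        rw [h1, h2]
      · rw [dif_neg h, dif_neg h]
    · simp only [Sum.elim_inr]
  cond_pos := by
    intro v x
    unfold condF
    rcases (eqv K).symm v with i | j
    · simp only [Sum.elim_inl]
      split_ifs <;> norm_num
    · simp only [Sum.elim_inr]; norm_num
  cond_lt_one := by
    intro v x
    unfold condF
    rcases (eqv K).symm v with i | j
    · simp only [Sum.elim_inl]
      split_ifs <;> norm_num
    · simp only [Sum.elim_inr]; norm_num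


/-! ### Evaluation of the weighted sum -/

def Xf (K : ℕ) (p : Fin (K+1) → Bool) (q : Fin K → Bool) : Fin (2*K+1) → Bool :=
  fun v => Sum.elim p q ((eqv K).symm v)

@[simp] lemma Xf_cI (K : ℕ) (p : Fin (K+1) → Bool) (q : Fin K → Bool) (i : Fin (K+1)) :
    Xf K p q (cI K i) = p i := by simp [Xf]

@[simp] lemma Xf_lI (K : ℕ) (p : Fin (K+1) → Bool) (q : Fin K → Bool) (j : Fin K) :
    Xf K p q (lI K j) = q j := by simp [Xf]

def asgn (K : ℕ) : ((Fin (K+1) → Bool) × (Fin K → Bool)) ≃ (Fin (2*K+1) → Bool) where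
  toFun pq := Xf K pq.1 pq.2
  invFun x := (fun i => x (cI K i), fun j => x (lI K j))
  left_inv := by rintro ⟨p, q⟩; simp
  right_inv := by
    intro x
    funext v
    show Sum.elim (fun i => x (cI K i)) (fun j => x (lI K j)) ((eqv K).symm v) = x v
    rcases hs : (eqv K).symm v with i | j
    · simp only [Sum.elim_inl]
      have hv : cI K i = v := by rw [cI, ← hs, Equiv.apply_symm_apply]
      rw [hv]
    · simp only [Sum.elim_inr]
      have hv : lI K j = v := by rw [lI, ← hs, Equiv.apply_symm_apply]
      rw [hv]

/-- The per-node weight `P(x_v | pa) * (φ_v(x) + 1)`. -/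
noncomputable def wf (K : ℕ) (v : Fin (2*K+1)) (x : Fin (2*K+1) → Bool) : ℝ :=
  (if x v then (theBN K).cond v x else 1 - (theBN K).cond v x) * ((theBN K).phi v x + 1)

lemma w_eval {m : ℕ} (B : BayesNet m) (v : Fin m) (x : Fin m → Bool) (s : ℝ)
    (hs : 0 < s) (hmu : B.cond v x * (1 - B.cond v x) = s^2) :
    (if x v then B.cond v x else 1 - B.cond v x) * (B.phi v x + 1)
      = if x v then B.cond v x + s else 1 - B.cond v x - s := by
  unfold BayesNet.phi BayesNet.sigma
  rw [hmu, Real.sqrt_sq hs.le]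
  cases hxv : x v <;> simp only [hxv, b2r, if_true, if_false, Bool.false_eq_true]
  · field_simp
    nlinarith [hmu]
  · field_simp
    nlinarith [hmu]

lemma cond_lI (K : ℕ) (j : Fin K) (x : Fin (2*K+1) → Bool) :
    (theBN K).cond (lI K j) x = 4/5 := by
  show condF K (lI K j) x = 4/5
  unfold condF
  rw [eqv_symm_lI]
  simp only [Sum.elim_inr]

lemma cond_cI_last (K : ℕ) (x : Fin (2*K+1) → Bool) :
    (theBN K).cond (cI K (Fin.last K)) x = 4/5 := by
  show condF K (cI K (Fin.last K)) x = 4/5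
  unfold condF
  rw [eqv_symm_cI]
  simp only [Sum.elim_inl]
  rw [dif_neg (by simp [Fin.last])]

lemma cond_cI_castSucc (K : ℕ) (i : Fin K) (x : Fin (2*K+1) → Bool) :
    (theBN K).cond (cI K i.castSucc) x
      = if x (cI K i.succ) = x (lI K i) then (1/2 : ℝ) else 1/26 := by
  show condF K (cI K i.castSucc) x = _
  unfold condF
  rw [eqv_symm_cI]
  have h : ((i.castSucc : Fin (K+1)) : ℕ) < K := i.isLt
  simp only [Sum.elim_inl, dif_pos h]
  have e1 : (⟨((i.castSucc : Fin (K+1)) : ℕ) + 1, by omega⟩ : Fin (K+1)) = i.succ :=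
    Fin.ext (by simp)
  have e2 : (⟨((i.castSucc : Fin (K+1)) : ℕ), h⟩ : Fin K) = i := Fin.ext (by simp)
  rw [e1, e2]

lemma wf_lI (K : ℕ) (p : Fin (K+1) → Bool) (q : Fin K → Bool) (j : Fin K) :
    wf K (lI K j) (Xf K p q) = lw (q j) := by
  unfold wf
  rw [w_eval (theBN K) _ _ (2/5) (by norm_num) (by rw [cond_lI]; norm_num)]
  rw [cond_lI, Xf_lI]
  unfold lw
  cases q j <;> norm_num

lemma wf_cI_last (K : ℕ) (p : Fin (K+1) → Bool) (q : Fin K → Bool) :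
    wf K (cI K (Fin.last K)) (Xf K p q) = lw (p (Fin.last K)) := by
  unfold wf
  rw [w_eval (theBN K) _ _ (2/5) (by norm_num) (by rw [cond_cI_last]; norm_num)]
  rw [cond_cI_last, Xf_cI]
  unfold lw
  cases p (Fin.last K) <;> norm_num

lemma wf_cI_castSucc (K : ℕ) (p : Fin (K+1) → Bool) (q : Fin K → Bool) (i : Fin K) :
    wf K (cI K i.castSucc) (Xf K p q) = cw (p i.castSucc) (p i.succ) (q i) := by
  unfold wf
  by_cases heq : p i.succ = q i
  · have hc : (theBN K).cond (cI K i.castSucc) (Xf K p q) = 1/2 := by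
      rw [cond_cI_castSucc]; simp [heq]
    rw [w_eval (theBN K) _ _ (1/2) (by norm_num) (by rw [hc]; norm_num), hc, Xf_cI]
    unfold cw
    cases hpc : p i.castSucc <;> simp [heq] <;> norm_num
  · have hc : (theBN K).cond (cI K i.castSucc) (Xf K p q) = 1/26 := by
      rw [cond_cI_castSucc]; simp only [Xf_cI, Xf_lI]; rw [if_neg heq]
    rw [w_eval (theBN K) _ _ (5/26) (by norm_num) (by rw [hc]; norm_num), hc, Xf_cI]
    unfold cw
    cases hpc : p i.castSucc <;> simp [heq] <;> norm_num

lemma prod_wf (K : ℕ) (p : Fin (K+1) → Bool) (q : Fin K → Bool) :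
    ∏ v, wf K v (Xf K p q)
      = lw (p (Fin.last K)) *
        ((∏ i : Fin K, cw (p i.castSucc) (p i.succ) (q i)) * ∏ j : Fin K, lw (q j)) := by
  rw [← Equiv.prod_comp (eqv K) (fun v => wf K v (Xf K p q)), Fintype.prod_sum_type]
  have h1 : ∀ i : Fin (K+1), wf K (eqv K (.inl i)) (Xf K p q) = wf K (cI K i) (Xf K p q) :=
    fun i => rfl
  have h2 : (∏ i : Fin (K+1), wf K (cI K i) (Xf K p q))
      = (∏ i : Fin K, cw (p i.castSucc) (p i.succ) (q i)) * lw (p (Fin.last K)) := by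
    rw [Fin.prod_univ_castSucc]
    rw [wf_cI_last]
    refine congrArg (· * lw (p (Fin.last K))) ?_
    exact Finset.prod_congr rfl (fun i _ => wf_cI_castSucc K p q i)
  calc (∏ i : Fin (K+1), wf K (eqv K (.inl i)) (Xf K p q)) *
        ∏ j : Fin K, wf K (eqv K (.inr j)) (Xf K p q)
      = ((∏ i : Fin K, cw (p i.castSucc) (p i.succ) (q i)) * lw (p (Fin.last K))) *
        ∏ j : Fin K, lw (q j) := by
        rw [show (∏ i : Fin (K+1), wf K (eqv K (.inl i)) (Xf K p q))
            = ∏ i : Fin (K+1), wf K (cI K i) (Xf K p q) from rfl, h2]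
        refine congrArg _ ?_
        exact Finset.prod_congr rfl (fun j _ => wf_lI K p q j)
    _ = _ := by ring

lemma main_sum (K : ℕ) :
    ∑ x : Fin (2*K+1) → Bool, b2r (x (cI K 0)) * ∏ v, wf K v x
      = (11/5) * (14/13 : ℝ)^K - 1 := by
  have h := Fintype.sum_equiv (asgn K)
    (fun pq => b2r ((asgn K pq) (cI K 0)) * ∏ v, wf K v (asgn K pq))
    (fun x => b2r (x (cI K 0)) * ∏ v, wf K v x) (fun pq => rfl)
  rw [← h, Fintype.sum_prod_type]
  have hterm : ∀ (p : Fin (K+1) → Bool) (q : Fin K → Bool),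
      b2r ((asgn K (p, q)) (cI K 0)) * ∏ v, wf K v (asgn K (p, q))
        = b2r (p 0) * lw (p (Fin.last K)) *
            ∏ i : Fin K, U (p i.castSucc) (p i.succ) (q i) := by
    intro p q
    have : asgn K (p, q) = Xf K p q := rfl
    rw [this, Xf_cI, prod_wf]
    unfold U
    rw [Finset.prod_mul_distrib]
    ring
  calc (∑ p : Fin (K+1) → Bool, ∑ q : Fin K → Bool,
        b2r ((asgn K (p, q)) (cI K 0)) * ∏ v, wf K v (asgn K (p, q)))
      = chainT K b2r := by
        unfold chainT
        exact Finset.sum_congr rfl (fun p _ => Finset.sum_congr rfl (fun q _ => hterm p q))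
    _ = (11/5) * (14/13 : ℝ)^K - 1 := by
        have : (fun b => (0:ℝ) + 1 * b2r b) = b2r := by funext b; ring
        rw [← this, chainT_affine]
        ring

/-! ### The spectral norm lower bound -/

lemma L1_ge (K : ℕ) :
    (11/5) * (14/13 : ℝ)^K - 1 ≤ (theBN K).L1 (fun x => b2r (x (cI K 0))) := by
  set B := theBN K
  set f : (Fin (2*K+1) → Bool) → ℝ := fun x => b2r (x (cI K 0)) with hf
  have step1 : ∑ S : Finset (Fin (2*K+1)), B.coeff f S ≤ B.L1 f :=
    Finset.sum_le_sum (fun S _ => le_abs_self _)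
  have step2 : ∑ S : Finset (Fin (2*K+1)), B.coeff f S
      = ∑ x : Fin (2*K+1) → Bool, b2r (x (cI K 0)) * ∏ v, wf K v x := by
    unfold BayesNet.coeff BayesNet.expect BayesNet.phiS
    rw [Finset.sum_comm]
    refine Finset.sum_congr rfl (fun x _ => ?_)
    have hsum : ∑ S : Finset (Fin (2*K+1)), ∏ v ∈ S, B.phi v x
        = ∏ v, (B.phi v x + 1) := by
      rw [Fintype.prod_add]
      simp
    calc ∑ S : Finset (Fin (2*K+1)), B.prob x * (f x * ∏ v ∈ S, B.phi v x)
        = B.prob x * f x * ∑ S : Finset (Fin (2*K+1)), ∏ v ∈ S, B.phi v x := by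
          rw [Finset.mul_sum]
          exact Finset.sum_congr rfl (fun S _ => by ring)
      _ = f x * (B.prob x * ∏ v, (B.phi v x + 1)) := by rw [hsum]; ring
      _ = b2r (x (cI K 0)) * ∏ v, wf K v x := by
          have : B.prob x * ∏ v, (B.phi v x + 1) = ∏ v, wf K v x := by
            unfold BayesNet.prob wf
            rw [← Finset.prod_mul_distrib]
          rw [this, hf]
    
  rw [← main_sum K]
  rw [← step2]
  exact step1

/-! ### Structural properties -/

lemma pa_card (K : ℕ) (v : Fin (2*K+1)) : ((theBN K).pa v).card ≤ 2 := by
  show (paF K v).card ≤ 2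
  unfold paF
  rcases (eqv K).symm v with i | j
  · simp only [Sum.elim_inl]
    split_ifs
    · exact le_trans (Finset.card_insert_le _ _) (by simp)
    · simp
  · simp

lemma sink_iff (K : ℕ) (v : Fin (2*K+1)) :
    (∀ w, v ∉ (theBN K).pa w) ↔ v = cI K 0 := by
  constructor
  · intro hv
    by_contra hne
    rcases hs : (eqv K).symm v with i | j
    · have hv_eq : v = cI K i := by rw [cI, ← hs, Equiv.apply_symm_apply]
      have hi : (i : ℕ) ≠ 0 := by
        intro h0
        apply hne
        rw [hv_eq]
        congr 1
        exact Fin.ext h0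
      have hiK : (i : ℕ) - 1 < K := by omega
      apply hv ((cI K ⟨(i : ℕ) - 1, by omega⟩))
      show v ∈ paF K _
      unfold paF
      rw [eqv_symm_cI]
      simp only [Sum.elim_inl, dif_pos hiK]
      apply Finset.mem_insert.mpr
      left
      rw [hv_eq]
      congr 1
      exact Fin.ext (by simp; omega)
    · have hv_eq : v = lI K j := by rw [lI, ← hs, Equiv.apply_symm_apply]
      apply hv (cI K j.castSucc)
      show v ∈ paF K _
      unfold paF
      rw [eqv_symm_cI]
      have hj : ((j.castSucc : Fin (K+1)) : ℕ) < K := j.isLt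
      simp only [Sum.elim_inl, dif_pos hj]
      apply Finset.mem_insert.mpr
      right
      apply Finset.mem_singleton.mpr
      rw [hv_eq]
      congr 1
  · intro hv w hw
    subst hv
    revert hw
    show cI K 0 ∉ paF K w
    unfold paF
    rcases (eqv K).symm w with i | j
    · simp only [Sum.elim_inl]
      split_ifs with h
      · intro hmem
        rcases Finset.mem_insert.mp hmem with h1 | h1
        · have := cI_injective K h1
          have : ((0 : Fin (K+1)) : ℕ) = (i : ℕ) + 1 := congrArg Fin.val this
          simp at this
        · rw [Finset.mem_singleton] at h1
          have : (eqv K).symm (cI K 0) = (eqv K).symm (lI K ⟨(i : ℕ), h⟩) := by rw [h1]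
          simp at this
      · exact Finset.notMem_empty _
    · simp only [Sum.elim_inr]
      exact Finset.notMem_empty _

lemma cond_ge (K : ℕ) (v : Fin (2*K+1)) (x : Fin (2*K+1) → Bool) :
    (0.01 : ℝ) ≤ (theBN K).cond v x := by
  show (0.01 : ℝ) ≤ condF K v x
  unfold condF
  rcases (eqv K).symm v with i | j
  · simp only [Sum.elim_inl]
    split_ifs <;> norm_num
  · simp only [Sum.elim_inr]; norm_num

lemma cond_spread (K : ℕ) (v : Fin (2*K+1)) (x y : Fin (2*K+1) → Bool) :
    |(theBN K).cond v x - (theBN K).cond v y| ≤ (0.49 : ℝ) := by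
  show |condF K v x - condF K v y| ≤ (0.49 : ℝ)
  unfold condF
  rcases (eqv K).symm v with i | j
  · simp only [Sum.elim_inl]
    split_ifs <;> rw [abs_sub_le_iff] <;> constructor <;> norm_num
  · simp only [Sum.elim_inr]
    rw [abs_sub_le_iff]; constructor <;> norm_num

end BNLower

/-- exponential lower bound for general graphs. For every
`n ≥ 1` there is a Bayesian network on `N = 24n − 1` binary nodes in which every
node has at most two parents, there is a single sink `v₁` (a node that is nobody's
parent), every conditional probability is at least `0.01`, and any two parent
assignments change a node's conditional probability by at most `0.49`, and yet the
single-variable function `f(x) = x_{v₁}` has spectral norm `L1(f) ≥ 1.05^n`,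
exponential in the number of nodes. -/
theorem bn_L1_exponential_lower_bound (n : ℕ) (hn : 1 ≤ n) :
    ∃ (B : BayesNet (24 * n - 1)) (v1 : Fin (24 * n - 1)),
      (∀ v, (B.pa v).card ≤ 2) ∧
      (∀ v : Fin (24 * n - 1), (∀ w, v ∉ B.pa w) ↔ v = v1) ∧
      (∀ v x, (0.01 : ℝ) ≤ B.cond v x) ∧
      (∀ v x y, |B.cond v x - B.cond v y| ≤ (0.49 : ℝ)) ∧
      (1.05 : ℝ) ^ n ≤ B.L1 (fun x => b2r (x v1)) := by
  have hK : 24 * n - 1 = 2 * (12 * n - 1) + 1 := by omega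
  rw [hK]
  set K := 12 * n - 1 with hKdef
  refine ⟨BNLower.theBN K, BNLower.cI K 0, BNLower.pa_card K, BNLower.sink_iff K,
    BNLower.cond_ge K, BNLower.cond_spread K, ?_⟩
  refine le_trans ?_ (BNLower.L1_ge K)
  have e1 : (1.05 : ℝ)^n ≤ (2:ℝ)^n := pow_le_pow_left₀ (by norm_num) (by norm_num) n
  have e2 : (2:ℝ)^n ≤ ((14/13 : ℝ))^(12*n) := by
    rw [pow_mul]
    exact pow_le_pow_left₀ (by norm_num) (by norm_num) n
  have e3 : (14/13 : ℝ)^(12*n) = (14/13 : ℝ)^K * (14/13) := by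
    rw [← pow_succ]
    congr 1
    omega
  have e4 : (13/14 : ℝ) * (2:ℝ)^n ≤ (14/13 : ℝ)^K := by
    rw [e3] at e2
    nlinarith [e2]
  have e5 : (2:ℝ) ≤ (2:ℝ)^n := by
    calc (2:ℝ) = 2^1 := (pow_one 2).symm
    _ ≤ 2^n := pow_le_pow_right₀ (by norm_num) hn
  nlinarith [e1, e4, e5]
end
end

section
/- Let D be a generalized k-junta distribution on {0,1}^n, represented as a Bayesian network in which a set J of k nodes forms an arbitrary DAG among themselves and every node outside J has all of its parents inside J. Let f be a conjunction with d literals over variable set C. Then f̂_S = 0 for every S with S \ (C ∪ J) ≠ ∅ (so f has at most 2^{k+d} nonzero Fourier coefficients), and the spectral norm of f is bounded by L1(f) ≤ 2^{(k+d)/2}. -/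
/-!
A Bayesian network (BN) distribution on {0,1}^n: a DAG on [n] (encoded by parent
sets together with a rank function witnessing acyclicity) and, for each node `v`,
a conditional probability `cond v x ∈ (0,1)` of `X_v = 1` given the parent values,
depending only on the coordinates in `pa v`.  The joint distribution is
`prob x = ∏ v, P(x_v | x_{pa v})`, and the BN-induced basis functions are
`φ_v(x) = (x_v − μ_{v,x_pa(v)})/σ_{v,x_pa(v)}`, `φ_S = ∏_{v∈S} φ_v`.
-/

open Finset

noncomputable section

/-!
The basis functions are orthonormal: peeling off a sink `w` of an ancestrally closed node set,
the conditional law of `X_w` given the rest has mean `μ_w` and variance `σ_w²`, so summing over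
`x_w` turns `φ_w` into `0` and `φ_w²` into `1`. A node outside `C ∪ J` is a parent of nobody
and `f` ignores it, so the same computation kills every coefficient `f̂_S` with
`S ⊄ C ∪ J`. Hence at most `2^{k+d}` coefficients survive, and Cauchy–Schwarz together with
Bessel's inequality `Σ f̂_S² ≤ E[f²] ≤ 1` gives `L1(f) ≤ 2^{(k+d)/2}`.
-/

open Function

lemma sum_sum_update_eq_card_nsmul {ι β M : Type*} [DecidableEq ι] [Fintype ι]
    [Fintype β] [AddCommMonoid M] (w : ι) (F : (ι → β) → M) :
    ∑ x : ι → β, ∑ b, F (update x w b) = Fintype.card β • ∑ x, F x := by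
  let e := Equiv.funSplitAt w β
  have hupdate : ∀ b b' y, update (e.symm (b', y)) w b = e.symm (b, y) := by
    intro b b' y; ext j; by_cases h : j = w <;> simp [e, h, update_of_ne]
  rw [← e.symm.sum_comp, ← e.symm.sum_comp, Fintype.sum_prod_type, Fintype.sum_prod_type,
    Finset.sum_comm (γ := β)]
  simp only [hupdate, sum_const, card_univ]
  rw [← Finset.smul_sum, Finset.sum_comm]

lemma Finset.eq_iff_erase_eq_and_mem_iff {α : Type*} [DecidableEq α] (w : α) (S T : Finset α) :
    S = T ↔ S.erase w = T.erase w ∧ (w ∈ S ↔ w ∈ T) := by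
  refine ⟨by rintro rfl; simp, fun ⟨herase, hw⟩ => ?_⟩
  ext u
  by_cases hu : u = w
  · rw [hu, hw]
  · simpa [hu] using Finset.ext_iff.1 herase u

lemma b2r_nonneg (b : Bool) : 0 ≤ b2r b := by cases b <;> simp [b2r]

lemma b2r_le_one (b : Bool) : b2r b ≤ 1 := by cases b <;> simp [b2r]

section Conj

variable {n : ℕ} (T0 T1 : Finset (Fin n))

lemma conj_nonneg (x : Fin n → Bool) : 0 ≤ conj T0 T1 x :=
  mul_nonneg (prod_nonneg fun _ _ => b2r_nonneg _)
    (prod_nonneg fun _ _ => sub_nonneg.2 (b2r_le_one _))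

lemma conj_le_one (x : Fin n → Bool) : conj T0 T1 x ≤ 1 :=
  mul_le_one₀ (prod_le_one (fun _ _ => b2r_nonneg _) fun _ _ => b2r_le_one _)
    (prod_nonneg fun _ _ => sub_nonneg.2 (b2r_le_one _))
    (prod_le_one (fun _ _ => sub_nonneg.2 (b2r_le_one _)) fun j _ =>
      sub_le_self _ (b2r_nonneg (x j)))

lemma conj_update_of_notMem {T0 T1 : Finset (Fin n)} {w : Fin n} (hw : w ∉ T0 ∪ T1)
    (x : Fin n → Bool) (b : Bool) : conj T0 T1 (update x w b) = conj T0 T1 x := by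
  have hne : ∀ i ∈ T0 ∪ T1, i ≠ w := fun i hi h => hw (h ▸ hi)
  unfold conj
  congr 1 <;> refine prod_congr rfl fun i hi => ?_ <;>
    rw [update_of_ne (hne i (by simp [hi]))]

end Conj

namespace BayesNet

variable {n : ℕ} (B : BayesNet n)

/-- `P(X_v = x_v | X_{pa v} = x_{pa v})`, so that `B.prob x = ∏ v, B.condProb v x`. -/
def condProb (v : Fin n) (x : Fin n → Bool) : ℝ :=
  if x v then B.cond v x else 1 - B.cond v x

lemma condProb_pos (v : Fin n) (x : Fin n → Bool) : 0 < B.condProb v x := by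
  unfold condProb; split
  · exact B.cond_pos v x
  · linarith [B.cond_lt_one v x]

lemma prob_pos (x : Fin n → Bool) : 0 < B.prob x :=
  prod_pos fun v _ => B.condProb_pos v x

lemma notMem_pa_self (v : Fin n) : v ∉ B.pa v := by
  obtain ⟨rank, hrank⟩ := B.acyclic
  exact fun h => lt_irrefl _ (hrank v v h)

lemma exists_sink {R : Finset (Fin n)} (hR : R.Nonempty) :
    ∃ w ∈ R, ∀ v ∈ R, w ∉ B.pa v := by
  obtain ⟨rank, hrank⟩ := B.acyclic
  obtain ⟨w, hwR, hmax⟩ := R.exists_max_image rank hR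
  exact ⟨w, hwR, fun v hv h => (hrank v w h).not_ge (hmax v hv)⟩

variable {B} {v w : Fin n}

lemma cond_update (hw : w ∉ B.pa v) (x : Fin n → Bool) (b : Bool) :
    B.cond v (update x w b) = B.cond v x :=
  B.cond_local v _ _ fun u hu => update_of_ne (by rintro rfl; exact hw hu) _ _

lemma sigma_update (hw : w ∉ B.pa v) (x : Fin n → Bool) (b : Bool) :
    B.sigma v (update x w b) = B.sigma v x := by
  unfold sigma; rw [cond_update hw]

lemma condProb_update_of_ne (hvw : v ≠ w) (hw : w ∉ B.pa v) (x : Fin n → Bool) (b : Bool) :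
    B.condProb v (update x w b) = B.condProb v x := by
  unfold condProb; rw [update_of_ne hvw, cond_update hw]

lemma phi_update_of_ne (hvw : v ≠ w) (hw : w ∉ B.pa v) (x : Fin n → Bool) (b : Bool) :
    B.phi v (update x w b) = B.phi v x := by
  unfold phi; rw [update_of_ne hvw, cond_update hw, sigma_update hw]

lemma phiS_update_of_notMem {S : Finset (Fin n)} (hwS : w ∉ S) (hpa : ∀ v ∈ S, w ∉ B.pa v)
    (x : Fin n → Bool) (b : Bool) : B.phiS S (update x w b) = B.phiS S x :=
  prod_congr rfl fun v hv =>
    phi_update_of_ne (by rintro rfl; exact hwS hv) (hpa v hv) x b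

variable (B w)

lemma condProb_update_self (x : Fin n → Bool) (b : Bool) :
    B.condProb w (update x w b) = if b then B.cond w x else 1 - B.cond w x := by
  simp [condProb, cond_update (B.notMem_pa_self w)]

lemma phi_update_self (x : Fin n → Bool) (b : Bool) :
    B.phi w (update x w b) = (b2r b - B.cond w x) / B.sigma w x := by
  simp [phi, cond_update (B.notMem_pa_self w), sigma_update (B.notMem_pa_self w)]

lemma sum_condProb_update_self (x : Fin n → Bool) :
    ∑ b, B.condProb w (update x w b) = 1 := by
  simp [condProb_update_self]

lemma sum_condProb_mul_phi_update_self (x : Fin n → Bool) :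
    ∑ b, B.condProb w (update x w b) * B.phi w (update x w b) = 0 := by
  simp only [Fintype.sum_bool, condProb_update_self, phi_update_self, b2r, if_true,
    Bool.false_eq_true, if_false]
  ring

lemma sum_condProb_mul_phi_sq_update_self (x : Fin n → Bool) :
    ∑ b, B.condProb w (update x w b) * B.phi w (update x w b) ^ 2 = 1 := by
  have hc0 := (B.cond_pos w x).ne'
  have hc1 : 1 - B.cond w x ≠ 0 := (sub_pos.2 (B.cond_lt_one w x)).ne'
  have hσ : B.sigma w x ^ 2 = B.cond w x * (1 - B.cond w x) :=
    Real.sq_sqrt (mul_pos (B.cond_pos w x) (sub_pos.2 (B.cond_lt_one w x))).le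
  simp only [Fintype.sum_bool, condProb_update_self, phi_update_self, b2r, if_true,
    Bool.false_eq_true, if_false, div_pow, hσ]
  field_simp
  ring

variable {B w}

lemma two_mul_sum_prod_condProb_mul_of_sink {R : Finset (Fin n)} (hwR : w ∈ R)
    (hsink : ∀ v ∈ R, w ∉ B.pa v) {K G : (Fin n → Bool) → ℝ} {m : ℝ}
    (hK : ∀ x, ∑ b, B.condProb w (update x w b) * K (update x w b) = m)
    (hG : ∀ x b, G (update x w b) = G x) :
    2 * ∑ x, (∏ v ∈ R, B.condProb v x) * (K x * G x)
      = m * ∑ x, (∏ v ∈ R.erase w, B.condProb v x) * G x := by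
  set A : (Fin n → Bool) → ℝ := fun x => (∏ v ∈ R.erase w, B.condProb v x) * G x with hA
  have hA_update : ∀ x b, A (update x w b) = A x := fun x b => by
    simp only [hA, hG]
    congr 1
    exact prod_congr rfl fun v hv =>
      condProb_update_of_ne (ne_of_mem_erase hv) (hsink v (mem_of_mem_erase hv)) x b
  calc 2 * ∑ x, (∏ v ∈ R, B.condProb v x) * (K x * G x)
      = 2 * ∑ x, B.condProb w x * K x * A x := by
        congr 1
        refine sum_congr rfl fun x _ => ?_
        rw [← mul_prod_erase R _ hwR]
        ring
    _ = ∑ x, ∑ b, B.condProb w (update x w b) * K (update x w b) * A (update x w b) := by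
        rw [sum_sum_update_eq_card_nsmul w fun x => B.condProb w x * K x * A x,
          Fintype.card_bool, two_nsmul, two_mul]
    _ = ∑ x, m * A x := by
        refine sum_congr rfl fun x _ => ?_
        simp only [hA_update, ← sum_mul, hK]
    _ = m * ∑ x, A x := (mul_sum ..).symm

lemma phiS_eq_ite_mul_phiS_erase (S : Finset (Fin n)) (x : Fin n → Bool) :
    B.phiS S x = (if w ∈ S then B.phi w x else 1) * B.phiS (S.erase w) x := by
  unfold phiS
  split_ifs with hwS
  · exact (mul_prod_erase S _ hwS).symm
  · rw [one_mul, erase_eq_of_notMem hwS]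

variable (B w)

lemma sum_condProb_mul_ite_phi_mul_ite_phi (S T : Finset (Fin n)) (x : Fin n → Bool) :
    ∑ b, B.condProb w (update x w b) *
        ((if w ∈ S then B.phi w (update x w b) else 1) *
          (if w ∈ T then B.phi w (update x w b) else 1))
      = if (w ∈ S ↔ w ∈ T) then 1 else 0 := by
  have h0 := B.sum_condProb_update_self w x
  have h1 := B.sum_condProb_mul_phi_update_self w x
  have h2 := B.sum_condProb_mul_phi_sq_update_self w x
  simp only [Fintype.sum_bool] at h0 h1 h2
  by_cases hwS : w ∈ S <;> by_cases hwT : w ∈ T <;> simp [hwS, hwT, ← sq, h0, h1, h2]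

variable {B}

lemma two_pow_card_mul_sum_prod_condProb_mul_phiS_mul_phiS {R : Finset (Fin n)}
    (hR : ∀ v ∈ R, B.pa v ⊆ R) {S T : Finset (Fin n)} (hS : S ⊆ R) (hT : T ⊆ R) :
    2 ^ #R * ∑ x, (∏ v ∈ R, B.condProb v x) * (B.phiS S x * B.phiS T x)
      = if S = T then 2 ^ n else 0 := by
  induction R using Finset.strongInduction generalizing S T with
  | H R ih =>
  rcases R.eq_empty_or_nonempty with rfl | hne
  · obtain rfl := subset_empty.1 hS
    obtain rfl := subset_empty.1 hT
    simp [phiS]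
  obtain ⟨w, hwR, hsink⟩ := B.exists_sink hne
  have hR' : ∀ v ∈ R.erase w, B.pa v ⊆ R.erase w := fun v hv =>
    subset_erase.2 ⟨hR v (mem_of_mem_erase hv), hsink v (mem_of_mem_erase hv)⟩
  have hIH := ih (R.erase w) (erase_ssubset hwR) hR' (erase_subset_erase w hS)
    (erase_subset_erase w hT)
  have hinv : ∀ U ⊆ R, ∀ x b, B.phiS (U.erase w) (update x w b) = B.phiS (U.erase w) x :=
    fun U hU => phiS_update_of_notMem (notMem_erase w U)
      fun v hv => hsink v (hU (mem_of_mem_erase hv))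
  have hstep := two_mul_sum_prod_condProb_mul_of_sink hwR hsink
    (K := fun x => (if w ∈ S then B.phi w x else 1) * (if w ∈ T then B.phi w x else 1))
    (B.sum_condProb_mul_ite_phi_mul_ite_phi w S T)
    (G := fun x => B.phiS (S.erase w) x * B.phiS (T.erase w) x)
    (fun x b => by simp only [hinv S hS, hinv T hT])
  calc 2 ^ #R * ∑ x, (∏ v ∈ R, B.condProb v x) * (B.phiS S x * B.phiS T x)
      = 2 ^ #(R.erase w) * (2 * ∑ x, (∏ v ∈ R, B.condProb v x) *
          (((if w ∈ S then B.phi w x else 1) * (if w ∈ T then B.phi w x else 1)) *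
            (B.phiS (S.erase w) x * B.phiS (T.erase w) x))) := by
        rw [← card_erase_add_one hwR, pow_succ, mul_assoc]
        congr 2
        refine sum_congr rfl fun x _ => ?_
        rw [phiS_eq_ite_mul_phiS_erase (w := w) S, phiS_eq_ite_mul_phiS_erase (w := w) T]
        ring
    _ = (if (w ∈ S ↔ w ∈ T) then 1 else 0) *
          (if S.erase w = T.erase w then 2 ^ n else 0) := by
        rw [hstep, ← hIH]
        ring
    _ = if S = T then 2 ^ n else 0 := by
        rw [ite_zero_mul_ite_zero, one_mul]
        exact if_congr (and_comm.trans (eq_iff_erase_eq_and_mem_iff w S T).symm) rfl rfl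

lemma expect_phiS_mul_phiS (S T : Finset (Fin n)) :
    B.expect (fun x => B.phiS S x * B.phiS T x) = if S = T then 1 else 0 := by
  have h := two_pow_card_mul_sum_prod_condProb_mul_phiS_mul_phiS (B := B) (R := univ)
    (fun v _ => subset_univ _) (subset_univ S) (subset_univ T)
  rw [card_univ, Fintype.card_fin] at h
  refine mul_left_cancel₀ (pow_ne_zero n (two_ne_zero (α := ℝ))) ?_
  rw [expect]
  refine h.trans ?_
  split_ifs <;> simp

lemma expect_one : B.expect (fun _ => 1) = 1 := by
  simpa [phiS] using B.expect_phiS_mul_phiS ∅ ∅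

lemma expect_le_one {g : (Fin n → Bool) → ℝ} (hg : ∀ x, g x ≤ 1) : B.expect g ≤ 1 :=
  calc B.expect g ≤ B.expect (fun _ => 1) :=
        sum_le_sum fun x _ => mul_le_mul_of_nonneg_left (hg x) (B.prob_pos x).le
    _ = 1 := B.expect_one

variable (B)

/-- An isometric copy of `L²(D)` in Euclidean space, through which Bessel's inequality applies. -/
def toEuclidean (g : (Fin n → Bool) → ℝ) : EuclideanSpace ℝ (Fin n → Bool) :=
  WithLp.toLp 2 fun x => √(B.prob x) * g x

lemma inner_toEuclidean (g h : (Fin n → Bool) → ℝ) :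
    inner ℝ (B.toEuclidean g) (B.toEuclidean h) = B.expect fun x => g x * h x := by
  simp only [toEuclidean, PiLp.inner_apply, RCLike.inner_apply, conj_trivial, expect]
  refine sum_congr rfl fun x _ => ?_
  linear_combination (g x * h x) * Real.mul_self_sqrt (B.prob_pos x).le

lemma orthonormal_toEuclidean_phiS : Orthonormal ℝ fun S => B.toEuclidean (B.phiS S) :=
  orthonormal_iff_ite.2 fun S T => by rw [inner_toEuclidean, expect_phiS_mul_phiS]

lemma sum_coeff_sq_le (f : (Fin n → Bool) → ℝ) :
    ∑ S, B.coeff f S ^ 2 ≤ B.expect fun x => f x ^ 2 := by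
  have h := B.orthonormal_toEuclidean_phiS.sum_inner_products_le (B.toEuclidean f) (s := univ)
  rw [← real_inner_self_eq_norm_sq, inner_toEuclidean] at h
  simpa [inner_toEuclidean, coeff, mul_comm, sq] using h

variable {B}

lemma coeff_eq_zero_of_sink {f : (Fin n → Bool) → ℝ} {S : Finset (Fin n)} {w : Fin n}
    (hwS : w ∈ S) (hsink : ∀ v, w ∉ B.pa v) (hf : ∀ x b, f (update x w b) = f x) :
    B.coeff f S = 0 := by
  have h := two_mul_sum_prod_condProb_mul_of_sink (mem_univ w) (fun v _ => hsink v)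
    (B.sum_condProb_mul_phi_update_self w) (G := fun x => f x * B.phiS (S.erase w) x)
    (fun x b => by rw [hf, phiS_update_of_notMem (notMem_erase w S) fun v _ => hsink v])
  have hcoeff : B.coeff f S
      = ∑ x, (∏ v, B.condProb v x) * (B.phi w x * (f x * B.phiS (S.erase w) x)) :=
    sum_congr rfl fun x _ => by
      show (∏ v, B.condProb v x) * (f x * B.phiS S x) = _
      rw [phiS_eq_ite_mul_phiS_erase (w := w) S x, if_pos hwS]
      ring
  linarith

lemma L1_sq_le (f : (Fin n → Bool) → ℝ) (K : Finset (Fin n))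
    (hK : ∀ S, ¬ S ⊆ K → B.coeff f S = 0) :
    B.L1 f ^ 2 ≤ 2 ^ #K * B.expect fun x => f x ^ 2 := by
  have hL1 : B.L1 f = ∑ S ∈ K.powerset, |B.coeff f S| :=
    (sum_subset (subset_univ _) fun S _ hS => by rw [hK S (by simpa using hS), abs_zero]).symm
  calc B.L1 f ^ 2 ≤ #K.powerset * ∑ S ∈ K.powerset, |B.coeff f S| ^ 2 :=
        hL1 ▸ sq_sum_le_card_mul_sum_sq
    _ ≤ 2 ^ #K * ∑ S, B.coeff f S ^ 2 := by
        rw [card_powerset, Nat.cast_pow, Nat.cast_ofNat]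
        simp_rw [sq_abs]
        gcongr
        exact subset_univ _
    _ ≤ _ := by
        gcongr
        exact B.sum_coeff_sq_le f

end BayesNet

theorem junta_L1_bound_general {n : ℕ} (B : BayesNet n) (k : ℕ)
    (J : Finset (Fin n)) (hJ : J.card = k)
    (hpa : ∀ v, B.pa v ⊆ J)
    (T0 T1 : Finset (Fin n))
    (d : ℕ) (hd : (T0 ∪ T1).card = d) :
    (∀ S : Finset (Fin n), ¬ S ⊆ (T0 ∪ T1) ∪ J → B.coeff (conj T0 T1) S = 0) ∧
    (univ.filter (fun S : Finset (Fin n) => B.coeff (conj T0 T1) S ≠ 0)).card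
        ≤ 2 ^ (k + d) ∧
    B.L1 (conj T0 T1) ≤ (2 : ℝ) ^ (((k : ℝ) + (d : ℝ)) / 2) := by
  have hvanish : ∀ S, ¬ S ⊆ (T0 ∪ T1) ∪ J → B.coeff (conj T0 T1) S = 0 := fun S hS => by
    obtain ⟨w, hwS, hwK⟩ := not_subset.1 hS
    rw [mem_union, not_or] at hwK
    exact BayesNet.coeff_eq_zero_of_sink hwS (fun v h => hwK.2 (hpa v h))
      (conj_update_of_notMem hwK.1)
  have hcard : 2 ^ #((T0 ∪ T1) ∪ J) ≤ 2 ^ (k + d) :=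
    Nat.pow_le_pow_right two_pos (hJ ▸ hd ▸ (card_union_le _ _).trans_eq (add_comm _ _))
  refine ⟨hvanish, ?_, ?_⟩
  · calc #(univ.filter fun S => B.coeff (conj T0 T1) S ≠ 0)
        ≤ #((T0 ∪ T1) ∪ J).powerset :=
          card_le_card fun S hS => mem_powerset.2 <| by
            by_contra h; exact (mem_filter.1 hS).2 (hvanish S h)
      _ ≤ 2 ^ (k + d) := (card_powerset _).trans_le hcard
  · have hsq : B.L1 (conj T0 T1) ^ 2 ≤ ((2 : ℝ) ^ (((k : ℝ) + (d : ℝ)) / 2)) ^ 2 :=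
      calc B.L1 (conj T0 T1) ^ 2 ≤ 2 ^ #((T0 ∪ T1) ∪ J) * 1 :=
            (B.L1_sq_le _ _ hvanish).trans <| by
              gcongr
              exact BayesNet.expect_le_one fun x =>
                pow_le_one₀ (conj_nonneg T0 T1 x) (conj_le_one T0 T1 x)
        _ ≤ 2 ^ (k + d) := by rw [mul_one]; exact_mod_cast hcard
        _ = _ := by
            rw [← Real.rpow_mul_natCast zero_le_two, ← Real.rpow_natCast]
            push_cast
            ring_nf
    exact (pow_le_pow_iff_left₀ (sum_nonneg fun _ _ => abs_nonneg _)
      (Real.rpow_nonneg zero_le_two _) two_ne_zero).1 hsq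

/-- spectral norm of conjunctions under generalized k-junta
distributions. Let the BN have a set `J` of `k` nodes forming an arbitrary DAG
among themselves, with every other node having all of its parents inside `J`
(i.e. `pa v ⊆ J` for all `v`).  For a conjunction `f` with `d` literals over the
variable set `C = T0 ∪ T1`: `f̂_S = 0` whenever `S ⊄ C ∪ J` (so `f` has at most
`2^{k+d}` nonzero coefficients), and `L1(f) ≤ 2^{(k+d)/2}`. -/
theorem junta_L1_bound {n : ℕ} (B : BayesNet n) (k : ℕ)
    (J : Finset (Fin n)) (hJ : J.card = k)
    (hpa : ∀ v, B.pa v ⊆ J)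
    (T0 T1 : Finset (Fin n)) (hdisj : Disjoint T0 T1)
    (d : ℕ) (hd : (T0 ∪ T1).card = d) :
    (∀ S : Finset (Fin n), ¬ S ⊆ (T0 ∪ T1) ∪ J → B.coeff (conj T0 T1) S = 0) ∧
    (univ.filter (fun S : Finset (Fin n) => B.coeff (conj T0 T1) S ≠ 0)).card
        ≤ 2 ^ (k + d) ∧
    B.L1 (conj T0 T1) ≤ (2 : ℝ) ^ (((k : ℝ) + (d : ℝ)) / 2) :=
  junta_L1_bound_general B k J hJ hpa T0 T1 d hd
end
end
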